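/- arXiv:2406.08136 — 3 statements merged into one kernel-verified Lean document; each statement's English description precedes it below -/
import Mathlib

section
/- Let B = (Q, Σ, Δ, Q₀, Acc) be a transition-based nondeterministic Büchi automaton with Acc ⊆ Δ. Then an ω-word σ is accepted by B (i.e., some run of σ traverses transitions from Acc infinitely often) if and only if σ ∈ ⋃_{q₀ ∈ Q₀, q ∈ F̃} L_{q₀q,all} · ((L_{qq,rej})* · L_{qq,acc})^ω, where F̃ = {q ∈ Q | ∃(q,t,y) ∈ Acc}, L_{ij,all} is the set of nonempty finite words having a run in B from state i ending upon first reaching state j, L_{ij,rej} is its subset of words with such a run whose first transition (out of state i) is rejecting (not in Acc), and L_{ij,acc} is its subset of words with such a run whose first transition is accepting (in Acc). -/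
open Computability

/-- `l` is a prefix of the ω-word `σ`. -/
def ListPrefixOf {α : Type*} (l : List α) (σ : ℕ → α) : Prop :=
  ∀ k (h : k < l.length), l.get ⟨k, h⟩ = σ k

/-- `σ` is the infinite concatenation of the nonempty finite words `f 0, f 1, f 2, …`. -/
def InfConcat {α : Type*} (f : ℕ → List α) (σ : ℕ → α) : Prop :=
  (∀ n, f n ≠ []) ∧ ∀ n, ListPrefixOf ((List.ofFn (fun i : Fin n => f i)).flatten) σ

/-- The ω-power `S^ω`: ω-words that are infinite concatenations of words from `S`. -/
def omegaPow {α : Type*} (S : Language α) : Set (ℕ → α) :=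
  {σ | ∃ f : ℕ → List α, (∀ n, f n ∈ S) ∧ InfConcat f σ}

/-- The ω-word obtained by prepending the finite word `u` to the ω-word `τ`. -/
def ωAppend {α : Type*} (u : List α) (τ : ℕ → α) : ℕ → α :=
  fun n => if h : n < u.length then u.get ⟨n, h⟩ else τ (n - u.length)

/-- Concatenation `A · L` of a language of finite words with an ω-language. -/
def catOmega {α : Type*} (A : Language α) (L : Set (ℕ → α)) : Set (ℕ → α) :=
  {σ | ∃ u ∈ A, ∃ τ ∈ L, σ = ωAppend u τ}

/-- A transition-based nondeterministic Büchi automaton. -/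
structure NBA (Q α : Type*) where
  Δ : Set (Q × α × Q)
  Q0 : Set Q
  Acc : Set (Q × α × Q)
  acc_sub : Acc ⊆ Δ

namespace NBA

variable {Q α : Type*}

/-- `F̃`: states with at least one outgoing accepting transition. -/
def Ftil (B : NBA Q α) : Set Q := {q | ∃ t y, (q, t, y) ∈ B.Acc}

/-- `p` is a run of the nonempty finite word `w` in `B` from `i` ending upon
first reaching `j` (i.e. `j` is visited exactly once, at the end). -/
def FinRun (B : NBA Q α) (i j : Q) (w : List α) (p : ℕ → Q) : Prop :=
  p 0 = i ∧ p w.length = j ∧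
  (∀ k (h : k < w.length), (p k, w.get ⟨k, h⟩, p (k + 1)) ∈ B.Δ) ∧
  (∀ k, 0 < k → k < w.length → p k ≠ j)

/-- `L_{ij,all}`: nonempty words with a run in `B` from `i` ending upon first reaching `j`. -/
def Lall (B : NBA Q α) (i j : Q) : Language α :=
  {w | w ≠ [] ∧ ∃ p : ℕ → Q, B.FinRun i j w p}

/-- `L_{ij,rej}`: words of `L_{ij,all}` with such a run whose first transition is rejecting. -/
def Lrej (B : NBA Q α) (i j : Q) : Language α :=
  {w | w ≠ [] ∧ ∃ p : ℕ → Q, B.FinRun i j w p ∧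
    ∀ h : 0 < w.length, (p 0, w.get ⟨0, h⟩, p 1) ∉ B.Acc}

/-- `L_{ij,acc}`: words of `L_{ij,all}` with such a run whose first transition is accepting. -/
def Lacc (B : NBA Q α) (i j : Q) : Language α :=
  {w | w ≠ [] ∧ ∃ p : ℕ → Q, B.FinRun i j w p ∧
    ∀ h : 0 < w.length, (p 0, w.get ⟨0, h⟩, p 1) ∈ B.Acc}

/-- `ρ` is a run of the ω-word `σ` in `B`. -/
def ωRun (B : NBA Q α) (σ : ℕ → α) (ρ : ℕ → Q) : Prop :=
  ρ 0 ∈ B.Q0 ∧ ∀ k, (ρ k, σ k, ρ (k + 1)) ∈ B.Δ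

/-- `B` accepts `σ`: some run traverses accepting transitions at infinitely many positions. -/
def Accepts (B : NBA Q α) (σ : ℕ → α) : Prop :=
  ∃ ρ : ℕ → Q, B.ωRun σ ρ ∧ ∀ N, ∃ k ≥ N, (ρ k, σ k, ρ (k + 1)) ∈ B.Acc

end NBA

namespace Stmt3Aux

attribute [local instance] Classical.propDecidable

variable {Q α : Type*}



/-- The finite word `σ a, σ (a+1), …, σ (b-1)`. -/
def seg (σ : ℕ → α) (a b : ℕ) : List α := List.ofFn (fun i : Fin (b - a) => σ (a + i))

@[simp] lemma seg_length (σ : ℕ → α) (a b : ℕ) : (seg σ a b).length = b - a := by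
  simp [seg]

lemma seg_getElem (σ : ℕ → α) (a b i : ℕ) (h : i < (seg σ a b).length) :
    (seg σ a b)[i] = σ (a + i) := by
  simp [seg]

lemma seg_ne_nil (σ : ℕ → α) {a b : ℕ} (h : a < b) : seg σ a b ≠ [] := by
  intro hc
  have := congrArg List.length hc
  simp at this
  omega

lemma seg_append (σ : ℕ → α) {a b c : ℕ} (hab : a ≤ b) (hbc : b ≤ c) :
    seg σ a b ++ seg σ b c = seg σ a c := by
  apply List.ext_getElem
  · simp; omega
  · intro i h1 h2
    by_cases hi : i < b - a
    · rw [List.getElem_append_left (by simpa using hi)]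
      rw [seg_getElem, seg_getElem]
    · rw [List.getElem_append_right (by simpa using hi)]
      rw [seg_getElem, seg_getElem]
      congr 1
      simp
      omega

/-- next element satisfying a frequently-true predicate -/
noncomputable def nxt {P : ℕ → Prop} (hP : ∀ N, ∃ k ≥ N, P k) (N : ℕ) : ℕ :=
  Nat.find (hP N)

lemma nxt_ge {P : ℕ → Prop} (hP : ∀ N, ∃ k ≥ N, P k) (N : ℕ) : N ≤ nxt hP N :=
  (Nat.find_spec (hP N)).1

lemma nxt_prop {P : ℕ → Prop} (hP : ∀ N, ∃ k ≥ N, P k) (N : ℕ) : P (nxt hP N) :=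
  (Nat.find_spec (hP N)).2

lemma nxt_min {P : ℕ → Prop} (hP : ∀ N, ∃ k ≥ N, P k) (N k : ℕ) (h1 : N ≤ k) (h2 : P k) :
    nxt hP N ≤ k :=
  Nat.find_min' (hP N) ⟨h1, h2⟩

/-- enumeration of a frequently-true predicate -/
noncomputable def enum {P : ℕ → Prop} (hP : ∀ N, ∃ k ≥ N, P k) : ℕ → ℕ
  | 0 => nxt hP 0
  | n + 1 => nxt hP (enum hP n + 1)

lemma enum_prop {P : ℕ → Prop} (hP : ∀ N, ∃ k ≥ N, P k) (n : ℕ) : P (enum hP n) := by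
  cases n <;> exact nxt_prop hP _

lemma enum_strictMono {P : ℕ → Prop} (hP : ∀ N, ∃ k ≥ N, P k) : StrictMono (enum hP) := by
  apply strictMono_nat_of_lt_succ
  intro n
  have := nxt_ge hP (enum hP n + 1)
  show _ < nxt hP (enum hP n + 1)
  omega

lemma enum_gap {P : ℕ → Prop} (hP : ∀ N, ∃ k ≥ N, P k) (n k : ℕ)
    (h1 : enum hP n < k) (h2 : k < enum hP (n + 1)) : ¬ P k := by
  intro hp
  have := nxt_min hP (enum hP n + 1) k (by omega) hp
  show False
  have h2' : k < nxt hP (enum hP n + 1) := h2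
  omega

lemma enum_pre {P : ℕ → Prop} (hP : ∀ N, ∃ k ≥ N, P k) (k : ℕ)
    (h2 : k < enum hP 0) : ¬ P k := by
  intro hp
  have := nxt_min hP 0 k (by omega) hp
  have h2' : k < nxt hP 0 := h2
  omega

lemma enum_ge {P : ℕ → Prop} (hP : ∀ N, ∃ k ≥ N, P k) (n : ℕ) : n ≤ enum hP n :=
  (enum_strictMono hP).le_apply

lemma enum_surj {P : ℕ → Prop} (hP : ∀ N, ∃ k ≥ N, P k) (k : ℕ) (hk : P k) :
    ∃ n, enum hP n = k := by
  set n := Nat.findGreatest (fun n => enum hP n ≤ k) k with hn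
  have h0 : enum hP 0 ≤ k := nxt_min hP 0 k (by omega) hk
  have hspec : enum hP n ≤ k := Nat.findGreatest_spec (P := fun n => enum hP n ≤ k) (Nat.zero_le k) h0
  have hgt : k < enum hP (n + 1) := by
    by_contra h
    push_neg at h
    have hb : n + 1 ≤ k := le_trans (enum_ge hP (n+1)) h
    have := Nat.le_findGreatest (P := fun n => enum hP n ≤ k) hb h
    omega
  rcases eq_or_lt_of_le hspec with h | h
  · exact ⟨n, h⟩
  · exact absurd hk (enum_gap hP n k h hgt)


lemma flatten_ofFn_succ (f : ℕ → List α) (n : ℕ) :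
    (List.ofFn (fun i : Fin (n + 1) => f i)).flatten
      = (List.ofFn (fun i : Fin n => f i)).flatten ++ f n := by
  rw [List.ofFn_succ' (fun i : Fin (n+1) => f i)]
  simp [List.concat_eq_append]

/-- flatten of consecutive segments -/
lemma flatten_seg (τ : ℕ → α) (C : ℕ → ℕ) (hC : Monotone C) (n k : ℕ) :
    (List.ofFn (fun i : Fin k => seg τ (C (n + i)) (C (n + i + 1)))).flatten
      = seg τ (C n) (C (n + k)) := by
  induction k generalizing n with
  | zero => simp [seg]
  | succ k ih =>
    rw [List.ofFn_succ]
    simp only [List.flatten_cons, Fin.val_succ, Fin.val_zero, Nat.add_zero]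
    have h2 : (List.ofFn fun i : Fin k => seg τ (C (n + (↑i + 1))) (C (n + (↑i + 1) + 1))).flatten
        = seg τ (C (n+1)) (C (n + 1 + k)) := by
      rw [← ih (n + 1)]
      congr 1
      congr 1
      funext i
      rw [show n + (↑i + 1) = n + 1 + ↑i by omega]
    rw [h2, seg_append τ (hC (by omega)) (hC (by omega))]
    congr 2
    omega

/-- cumulative lengths -/
def cum (f : ℕ → List α) : ℕ → ℕ := fun n => ((List.ofFn fun i : Fin n => f i).flatten).length

@[simp] lemma cum_zero (f : ℕ → List α) : cum f 0 = 0 := by simp [cum]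

lemma cum_succ (f : ℕ → List α) (n : ℕ) : cum f (n + 1) = cum f n + (f n).length := by
  unfold cum
  rw [flatten_ofFn_succ, List.length_append]

lemma cum_strictMono {f : ℕ → List α} (hf : ∀ n, f n ≠ []) : StrictMono (cum f) := by
  apply strictMono_nat_of_lt_succ
  intro n
  rw [cum_succ]
  have := List.length_pos_iff.2 (hf n)
  omega

lemma infConcat_getElem {f : ℕ → List α} {τ : ℕ → α} (hc : InfConcat f τ) (n i : ℕ)
    (hi : i < (f n).length) : τ (cum f n + i) = (f n)[i] := by
  have hpre := hc.2 (n + 1)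
  have hlen : cum f n + i < ((List.ofFn fun j : Fin (n+1) => f j).flatten).length := by
    have : ((List.ofFn fun j : Fin (n+1) => f j).flatten).length = cum f (n + 1) := rfl
    rw [this, cum_succ]; omega
  have h1 := hpre (cum f n + i) hlen
  rw [List.get_eq_getElem] at h1
  rw [← h1]
  simp only [flatten_ofFn_succ]
  rw [List.getElem_append_right (by exact Nat.le_add_right _ _)]
  have hcum : ((List.ofFn fun j : Fin n => f (j : ℕ)).flatten).length = cum f n := rfl
  congr 1
  rw [hcum]
  omega

/-- build InfConcat from cut points -/
lemma infConcat_of_cuts (τ : ℕ → α) (D : ℕ → ℕ) (hD : StrictMono D) (h0 : D 0 = 0) :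
    InfConcat (fun j => seg τ (D j) (D (j + 1))) τ := by
  have hfl : ∀ n : ℕ, (List.ofFn fun i : Fin n => seg τ (D ↑i) (D (↑i + 1))).flatten
      = seg τ 0 (D n) := by
    intro n
    have := flatten_seg τ D hD.monotone 0 n
    simp only [Nat.zero_add] at this
    rw [← h0]
    exact this
  constructor
  · intro n; exact seg_ne_nil τ (hD (by omega))
  · intro n k hk
    rw [List.get_eq_getElem]
    simp only [hfl] at hk ⊢
    rw [seg_getElem]
    simp

lemma ωAppend_seg_shift (σ : ℕ → α) (s : ℕ) :
    ωAppend (seg σ 0 s) (fun n => σ (n + s)) = σ := by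
  funext n
  unfold ωAppend
  split
  · next h =>
    rw [List.get_eq_getElem, seg_getElem]
    simp
  · next h =>
    rw [seg_length] at h ⊢
    simp only [Nat.sub_zero] at h ⊢
    show σ (n - s + s) = σ n
    congr 1
    omega


/-- a run from i to j with transitions in Δ (interior visits allowed) -/
def WeakRun (B : NBA Q α) (i j : Q) (w : List α) (p : ℕ → Q) : Prop :=
  p 0 = i ∧ p w.length = j ∧ ∀ k (h : k < w.length), (p k, w[k], p (k + 1)) ∈ B.Δ

lemma WeakRun.append {B : NBA Q α} {i j l : Q} {w1 w2 : List α} {p1 p2 : ℕ → Q}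
    (h1 : WeakRun B i j w1 p1) (h2 : WeakRun B j l w2 p2) :
    WeakRun B i l (w1 ++ w2) (fun k => if k < w1.length then p1 k else p2 (k - w1.length)) := by
  obtain ⟨h10, h1e, h1t⟩ := h1
  obtain ⟨h20, h2e, h2t⟩ := h2
  refine ⟨?_, ?_, ?_⟩
  · show (if 0 < w1.length then p1 0 else p2 (0 - w1.length)) = i
    by_cases h : 0 < w1.length
    · rw [if_pos h, h10]
    · have h0 : w1.length = 0 := by omega
      rw [if_neg h, Nat.zero_sub, h20, ← h1e, h0, h10]
  · show (if (w1 ++ w2).length < w1.length then p1 (w1 ++ w2).length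
      else p2 ((w1 ++ w2).length - w1.length)) = l
    rw [List.length_append, if_neg (by omega), Nat.add_sub_cancel_left, h2e]
  · intro k hk
    rw [List.length_append] at hk
    show (if k < w1.length then p1 k else p2 (k - w1.length), (w1 ++ w2)[k]'(by
        rw [List.length_append]; omega),
      if k + 1 < w1.length then p1 (k + 1) else p2 (k + 1 - w1.length)) ∈ B.Δ
    by_cases h : k < w1.length
    · rw [if_pos h, List.getElem_append_left h]
      by_cases h' : k + 1 < w1.length
      · rw [if_pos h']
        exact h1t k h
      · have hk1 : k + 1 = w1.length := by omega
        rw [if_neg h', hk1, Nat.sub_self, h20, ← h1e, ← hk1]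
        exact h1t k h
    · rw [if_neg h, if_neg (by omega), List.getElem_append_right (by omega)]
      rw [show k + 1 - w1.length = k - w1.length + 1 by omega]
      exact h2t (k - w1.length) (by omega)

lemma weakRun_flatten {B : NBA Q α} {q : Q} (L : List (List α))
    (hL : ∀ w ∈ L, ∃ p, WeakRun B q q w p) : ∃ p, WeakRun B q q L.flatten p := by
  induction L with
  | nil => exact ⟨fun _ => q, rfl, rfl, by intro k h; simp at h⟩
  | cons w L ih =>
    obtain ⟨p1, hp1⟩ := hL w (by simp)
    obtain ⟨p2, hp2⟩ := ih (fun w' hw' => hL w' (by simp [hw']))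
    rw [List.flatten_cons]
    exact ⟨_, hp1.append hp2⟩

/-- a nonempty word with a weak run q→q containing an accepting transition -/
def GoodRun (B : NBA Q α) (q : Q) (w : List α) : Prop :=
  w ≠ [] ∧ ∃ p : ℕ → Q, WeakRun B q q w p ∧
    ∃ k, ∃ h : k < w.length, (p k, w[k], p (k + 1)) ∈ B.Acc

lemma finRun_weakRun {B : NBA Q α} {i j : Q} {w : List α} {p : ℕ → Q}
    (h : B.FinRun i j w p) : WeakRun B i j w p :=
  ⟨h.1, h.2.1, fun k hk => h.2.2.1 k hk⟩

lemma goodRun_of_block {B : NBA Q α} {q : Q} {w : List α}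
    (hw : w ∈ (B.Lrej q q)∗ * B.Lacc q q) : GoodRun B q w := by
  rw [Language.mem_mul] at hw
  obtain ⟨a, ha, b, hb, hab⟩ := hw
  rw [Language.mem_kstar] at ha
  obtain ⟨L, rfl, hL⟩ := ha
  obtain ⟨hbne, p2, hp2, hacc⟩ := hb
  obtain ⟨p1, hp1⟩ := weakRun_flatten L (fun w' hw' => by
    obtain ⟨_, p, hp, _⟩ := hL w' hw'
    exact ⟨p, finRun_weakRun hp⟩)
  have hblen : 0 < b.length := List.length_pos_iff.2 hbne
  subst hab
  refine ⟨?_, _, hp1.append (finRun_weakRun hp2), L.flatten.length, ?_, ?_⟩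
  · intro hc
    rcases List.append_eq_nil_iff.1 hc with ⟨_, h2⟩
    exact hbne h2
  · rw [List.length_append]; omega
  · show (if L.flatten.length < L.flatten.length then p1 L.flatten.length
        else p2 (L.flatten.length - L.flatten.length),
      (L.flatten ++ b)[L.flatten.length]'(by rw [List.length_append]; omega),
      if L.flatten.length + 1 < L.flatten.length then p1 (L.flatten.length + 1)
        else p2 (L.flatten.length + 1 - L.flatten.length)) ∈ B.Acc
    rw [if_neg (by omega), if_neg (by omega), Nat.sub_self,
      show L.flatten.length + 1 - L.flatten.length = 1 by omega,
      List.getElem_append_right (le_refl _)]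
    simp only [Nat.sub_self]
    exact hacc hblen

/-- stitch together runs of blocks, abstract version -/
lemma run_of_blocks' {B : NBA Q α} {q : Q} {τ : ℕ → α} {f : ℕ → List α} (p : ℕ → ℕ → Q)
    (hlen : ∀ n, 0 < (f n).length)
    (hp0 : ∀ n, p n 0 = q) (hpe : ∀ n, p n (f n).length = q)
    (hpt : ∀ n k (h : k < (f n).length), (p n k, (f n)[k], p n (k + 1)) ∈ B.Δ)
    (hacc : ∀ n, ∃ k, ∃ h : k < (f n).length, (p n k, (f n)[k], p n (k + 1)) ∈ B.Acc)
    (c : ℕ → ℕ) (hc0 : c 0 = 0) (hcsucc : ∀ n, c (n + 1) = c n + (f n).length)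
    (hτ : ∀ n i (hi : i < (f n).length), τ (c n + i) = (f n)[i]) :
    ∃ ρ : ℕ → Q, ρ 0 = q ∧ (∀ k, (ρ k, τ k, ρ (k + 1)) ∈ B.Δ) ∧
      ∀ N, ∃ k ≥ N, (ρ k, τ k, ρ (k + 1)) ∈ B.Acc := by
  have hcs : StrictMono c := strictMono_nat_of_lt_succ (fun n => by
    rw [hcsucc]; have := hlen n; omega)
  have hcn : ∀ n, n ≤ c n := fun n => hcs.le_apply
  set J : ℕ → ℕ := fun k => Nat.findGreatest (fun j => c j ≤ k) k with hJdef
  have hJ : ∀ n k, c n ≤ k → k < c (n + 1) → J k = n := by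
    intro n k h1 h2
    have hge : n ≤ J k := Nat.le_findGreatest (le_trans (hcn n) h1) h1
    have hle : J k ≤ n := by
      by_contra hlt
      push_neg at hlt
      have hspec : c (J k) ≤ k :=
        Nat.findGreatest_spec (P := fun j => c j ≤ k) (Nat.zero_le k)
          (show c 0 ≤ k by omega)
      have : c (n + 1) ≤ c (J k) := hcs.monotone hlt
      omega
    omega
  set ρ : ℕ → Q := fun k => p (J k) (k - c (J k)) with hρdef
  have hval : ∀ n k, c n ≤ k → k < c (n + 1) →
      ρ k = p n (k - c n) ∧ ρ (k + 1) = p n (k - c n + 1) := by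
    intro n k h1 h2
    constructor
    · show p (J k) (k - c (J k)) = _
      rw [hJ n k h1 h2]
    · show p (J (k + 1)) (k + 1 - c (J (k + 1))) = _
      by_cases h : k + 1 < c (n + 1)
      · rw [hJ n (k + 1) (by omega) h]
        congr 1; omega
      · have hk1 : k + 1 = c (n + 1) := by omega
        have h2' : k + 1 < c (n + 1 + 1) := by
          have := hcsucc (n + 1); have := hlen (n + 1); omega
        rw [hJ (n + 1) (k + 1) (by omega) h2']
        rw [hk1, Nat.sub_self, hp0 (n + 1)]
        rw [show k - c n + 1 = (f n).length by have := hcsucc n; omega]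
        exact (hpe n).symm
  have hex : ∀ k, ∃ n, c n ≤ k ∧ k < c (n + 1) := by
    intro k
    have hub : k < c (k + 1) := by have := hcn (k + 1); omega
    have h := Nat.find_spec (⟨k + 1, hub⟩ : ∃ n, k < c n)
    set n := Nat.find (⟨k + 1, hub⟩ : ∃ n, k < c n) with hn
    match hm : n, h with
    | 0, h => rw [hc0] at h; omega
    | m + 1, h =>
      refine ⟨m, ?_, h⟩
      have := Nat.find_min (⟨k + 1, hub⟩ : ∃ n, k < c n) (show m < n by omega)
      omega
  refine ⟨ρ, ?_, ?_, ?_⟩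
  · show p (J 0) (0 - c (J 0)) = q
    rw [hJ 0 0 (by omega) (by have := hcsucc 0; have := hlen 0; omega), hc0, Nat.zero_sub, hp0]
  · intro k
    obtain ⟨n, h1, h2⟩ := hex k
    obtain ⟨e1, e2⟩ := hval n k h1 h2
    rw [e1, e2]
    have hilt : k - c n < (f n).length := by have := hcsucc n; omega
    have hτk : τ k = (f n)[k - c n] := by
      conv_lhs => rw [show k = c n + (k - c n) by omega]
      exact hτ n _ hilt
    rw [hτk]
    exact hpt n (k - c n) hilt
  · intro N
    obtain ⟨kn, hkn, hka⟩ := hacc N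
    refine ⟨c N + kn, by have := hcn N; omega, ?_⟩
    have h1 : c N ≤ c N + kn := by omega
    have h2 : c N + kn < c (N + 1) := by have := hcsucc N; omega
    obtain ⟨e1, e2⟩ := hval N (c N + kn) h1 h2
    rw [e1, e2, Nat.add_sub_cancel_left]
    rw [hτ N kn hkn]
    exact hka

/-- stitch together runs of the blocks of an InfConcat -/
lemma run_of_blocks {B : NBA Q α} {q : Q} {τ : ℕ → α} {f : ℕ → List α}
    (hf : ∀ n, GoodRun B q (f n)) (hc : InfConcat f τ) :
    ∃ ρ : ℕ → Q, ρ 0 = q ∧ (∀ k, (ρ k, τ k, ρ (k + 1)) ∈ B.Δ) ∧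
      ∀ N, ∃ k ≥ N, (ρ k, τ k, ρ (k + 1)) ∈ B.Acc := by
  choose p hp hacc using fun n => (hf n).2
  exact run_of_blocks' p (fun n => List.length_pos_iff.2 (hf n).1)
    (fun n => (hp n).1) (fun n => (hp n).2.1) (fun n => (hp n).2.2)
    hacc (cum f) (cum_zero f) (cum_succ f) (fun n i hi => infConcat_getElem hc n i hi)


lemma infinite_of_freq {P : ℕ → Prop} (h : ∀ N, ∃ k ≥ N, P k) : {k | P k}.Infinite := by
  intro hfin
  obtain ⟨M, hM⟩ := hfin.bddAbove
  obtain ⟨k, hk, hPk⟩ := h (M + 1)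
  have := hM hPk
  omega

lemma pigeon [Finite Q] (g : ℕ → Q) {P : ℕ → Prop} (h : ∀ N, ∃ k ≥ N, P k) :
    ∃ q, ∀ N, ∃ k ≥ N, P k ∧ g k = q := by
  by_contra hc
  push_neg at hc
  choose N hN using hc
  have hsub : {k | P k} ⊆ ⋃ q, {k | P k ∧ g k = q} :=
    fun k hk => Set.mem_iUnion.2 ⟨g k, hk, rfl⟩
  have hfin : (⋃ q : Q, {k | P k ∧ g k = q}).Finite := by
    apply Set.finite_iUnion
    intro q
    apply (Set.finite_Iio (N q)).subset
    rintro k ⟨hPk, hgk⟩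
    by_contra hlt
    simp only [Set.mem_Iio, not_lt] at hlt
    exact hN q k (by omega) hPk hgk
  exact infinite_of_freq h (hfin.subset hsub)

/-- the forward core: a run visiting `q` with accepting transitions out of `q`
infinitely often yields the ω-power decomposition -/
lemma omegaPow_of_run {B : NBA Q α} {q : Q} {τ : ℕ → α} (ρ : ℕ → Q) (h0 : ρ 0 = q)
    (hΔ : ∀ k, (ρ k, τ k, ρ (k + 1)) ∈ B.Δ)
    (hA : ∀ N, ∃ k ≥ N, ρ k = q ∧ (ρ k, τ k, ρ (k + 1)) ∈ B.Acc) :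
    τ ∈ omegaPow ((B.Lrej q q)∗ * B.Lacc q q) := by
  have hP : ∀ N, ∃ k ≥ N, (1 ≤ k ∧ ρ k = q) := by
    intro N
    obtain ⟨k, hk, h1, _⟩ := hA (max N 1)
    exact ⟨k, by omega, by omega, h1⟩
  obtain ⟨C, hC0, hCs⟩ : ∃ C : ℕ → ℕ, C 0 = 0 ∧ ∀ n, C (n + 1) = enum hP n :=
    ⟨fun n => match n with | 0 => 0 | Nat.succ m => enum hP m, rfl, fun _ => rfl⟩
  have hCq : ∀ n, ρ (C n) = q := by
    intro n
    cases n with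
    | zero => rw [hC0]; exact h0
    | succ m => rw [hCs]; exact (enum_prop hP m).2
  have hCmono : StrictMono C := by
    apply strictMono_nat_of_lt_succ
    intro n
    cases n with
    | zero =>
      have := (enum_prop hP 0).1
      rw [hC0, hCs]; omega
    | succ m => rw [hCs, hCs]; exact enum_strictMono hP (by omega)
  have hint : ∀ n k, C n < k → k < C (n + 1) → ρ k ≠ q := by
    intro n k hk1 hk2 hq
    cases n with
    | zero =>
      rw [hC0] at hk1
      exact enum_pre hP k (by rw [hCs] at hk2; exact hk2) ⟨by omega, hq⟩
    | succ m =>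
      exact enum_gap hP m k (by rw [hCs] at hk1; exact hk1)
        (by rw [hCs] at hk2; exact hk2) ⟨by omega, hq⟩
  have hsur : ∀ k, 1 ≤ k → ρ k = q → ∃ n, C (n + 1) = k := by
    intro k h1 h2
    obtain ⟨n, hn⟩ := enum_surj hP k ⟨h1, h2⟩
    exact ⟨n, by rw [hCs]; exact hn⟩
  have hg : ∀ n, B.FinRun q q (seg τ (C n) (C (n + 1))) (fun i => ρ (C n + i)) := by
    intro n
    refine ⟨by simp [hCq n], ?_, ?_, ?_⟩
    · show ρ (C n + (seg τ (C n) (C (n + 1))).length) = q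
      rw [seg_length, show C n + (C (n + 1) - C n) = C (n + 1) by
        have := hCmono (show n < n + 1 by omega); omega]
      exact hCq (n + 1)
    · intro k hk
      show (ρ (C n + k), (seg τ (C n) (C (n + 1))).get ⟨k, hk⟩, ρ (C n + (k + 1))) ∈ B.Δ
      rw [List.get_eq_getElem, seg_getElem]
      show (ρ (C n + k), τ (C n + k), ρ (C n + k + 1)) ∈ B.Δ
      exact hΔ (C n + k)
    · intro k hk0 hklen
      rw [seg_length] at hklen
      exact hint n (C n + k) (by omega) (by omega)
  have hclass_acc : ∀ n, (ρ (C n), τ (C n), ρ (C n + 1)) ∈ B.Acc →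
      seg τ (C n) (C (n + 1)) ∈ B.Lacc q q := by
    intro n hcl
    refine ⟨seg_ne_nil τ (hCmono (show n < n + 1 by omega)), _, hg n, ?_⟩
    intro h
    show (ρ (C n + 0), (seg τ (C n) (C (n + 1))).get ⟨0, h⟩, ρ (C n + 1)) ∈ B.Acc
    rw [List.get_eq_getElem, seg_getElem]
    show (ρ (C n + 0), τ (C n + 0), ρ (C n + 1)) ∈ B.Acc
    rw [Nat.add_zero]
    exact hcl
  have hclass_rej : ∀ n, (ρ (C n), τ (C n), ρ (C n + 1)) ∉ B.Acc →
      seg τ (C n) (C (n + 1)) ∈ B.Lrej q q := by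
    intro n hcl
    refine ⟨seg_ne_nil τ (hCmono (show n < n + 1 by omega)), _, hg n, ?_⟩
    intro h
    show (ρ (C n + 0), (seg τ (C n) (C (n + 1))).get ⟨0, h⟩, ρ (C n + 1)) ∉ B.Acc
    rw [List.get_eq_getElem, seg_getElem]
    show (ρ (C n + 0), τ (C n + 0), ρ (C n + 1)) ∉ B.Acc
    rw [Nat.add_zero]
    exact hcl
  have hfreqacc : ∀ N, ∃ n ≥ N, (ρ (C n), τ (C n), ρ (C n + 1)) ∈ B.Acc := by
    intro N
    obtain ⟨k, hk, h1, h2⟩ := hA (C N + 1)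
    obtain ⟨n, hn⟩ := hsur k (by omega) h1
    refine ⟨n + 1, ?_, by rw [hn]; exact h2⟩
    have hlt : C N < C (n + 1) := by omega
    have := hCmono.lt_iff_lt.1 hlt
    omega
  obtain ⟨E, hE0, hEs⟩ : ∃ E : ℕ → ℕ, E 0 = 0 ∧ ∀ j, E (j + 1) = enum hfreqacc j + 1 :=
    ⟨fun j => match j with | 0 => 0 | Nat.succ m => enum hfreqacc m + 1, rfl, fun _ => rfl⟩
  have hEle : ∀ j, E j ≤ enum hfreqacc j := by
    intro j
    cases j with
    | zero => rw [hE0]; exact Nat.zero_le _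
    | succ m =>
      rw [hEs]
      exact enum_strictMono hfreqacc (show m < m + 1 by omega)
  have hEgap : ∀ j n, E j ≤ n → n < enum hfreqacc j →
      (ρ (C n), τ (C n), ρ (C n + 1)) ∉ B.Acc := by
    intro j n h1 h2
    cases j with
    | zero => exact enum_pre hfreqacc n h2
    | succ m => exact enum_gap hfreqacc m n (by rw [hEs] at h1; omega) h2
  have hEmono : StrictMono E := by
    apply strictMono_nat_of_lt_succ
    intro j
    cases j with
    | zero => rw [hE0, hEs]; omega
    | succ m =>
      rw [hEs, hEs]
      have := enum_strictMono hfreqacc (show m < m + 1 by omega)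
      omega
  have hDmono : StrictMono (fun j => C (E j)) := fun i j hij => hCmono (hEmono hij)
  have hD0 : C (E 0) = 0 := by rw [hE0, hC0]
  refine ⟨fun j => seg τ (C (E j)) (C (E (j + 1))), ?_,
    infConcat_of_cuts τ (fun j => C (E j)) hDmono hD0⟩
  intro j
  rw [Language.mem_mul]
  refine ⟨seg τ (C (E j)) (C (enum hfreqacc j)), ?_,
    seg τ (C (enum hfreqacc j)) (C (enum hfreqacc j + 1)), ?_, ?_⟩
  · rw [Language.mem_kstar]
    refine ⟨List.ofFn (fun i : Fin (enum hfreqacc j - E j) =>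
      seg τ (C (E j + i)) (C (E j + i + 1))), ?_, ?_⟩
    · have := flatten_seg τ C hCmono.monotone (E j) (enum hfreqacc j - E j)
      rw [show E j + (enum hfreqacc j - E j) = enum hfreqacc j by have := hEle j; omega] at this
      rw [this]
    · intro y hy
      rw [List.mem_ofFn] at hy
      obtain ⟨i, hi⟩ := hy
      rw [← hi]
      exact hclass_rej _ (hEgap j (E j + i) (by omega) (by have := i.isLt; omega))
  · exact hclass_acc (enum hfreqacc j) (enum_prop hfreqacc j)
  · rw [seg_append τ (hCmono.monotone (hEle j)) (hCmono.monotone (by omega))]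
    show _ = seg τ (C (E j)) (C (E (j + 1)))
    rw [hEs]

/-- backward: assemble an accepting run -/
lemma accepts_of_parts {B : NBA Q α} {τ : ℕ → α} {q0 q : Q} {u : List α} (hq0 : q0 ∈ B.Q0)
    (hu : u ∈ B.Lall q0 q)
    (ρ' : ℕ → Q) (h0' : ρ' 0 = q) (hΔ' : ∀ k, (ρ' k, τ k, ρ' (k + 1)) ∈ B.Δ)
    (hA' : ∀ N, ∃ k ≥ N, (ρ' k, τ k, ρ' (k + 1)) ∈ B.Acc) :
    B.Accepts (ωAppend u τ) := by
  obtain ⟨hune, pu, hpu⟩ := hu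
  have hm : 0 < u.length := List.length_pos_iff.2 hune
  have hωlt : ∀ k (h : k < u.length), ωAppend u τ k = u[k] := by
    intro k h
    unfold ωAppend
    rw [dif_pos h, List.get_eq_getElem]
  have hωge : ∀ k, u.length ≤ k → ωAppend u τ k = τ (k - u.length) := by
    intro k h
    unfold ωAppend
    rw [dif_neg (by omega)]
  refine ⟨fun k => if k < u.length then pu k else ρ' (k - u.length), ⟨?_, ?_⟩, ?_⟩
  · show (if 0 < u.length then pu 0 else ρ' (0 - u.length)) ∈ B.Q0
    rw [if_pos hm, hpu.1]
    exact hq0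
  · intro k
    show (if k < u.length then pu k else ρ' (k - u.length), ωAppend u τ k,
      if k + 1 < u.length then pu (k + 1) else ρ' (k + 1 - u.length)) ∈ B.Δ
    by_cases h : k < u.length
    · rw [if_pos h, hωlt k h]
      have ht := hpu.2.2.1 k h
      rw [List.get_eq_getElem] at ht
      by_cases h' : k + 1 < u.length
      · rw [if_pos h']
        exact ht
      · have hk1 : k + 1 = u.length := by omega
        rw [if_neg h', hk1, Nat.sub_self, h0', ← hpu.2.1, ← hk1]
        exact ht
    · rw [if_neg h, if_neg (by omega), hωge k (by omega)]
      rw [show k + 1 - u.length = k - u.length + 1 by omega]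
      exact hΔ' (k - u.length)
  · intro N
    obtain ⟨k, hk, hka⟩ := hA' N
    refine ⟨k + u.length, by omega, ?_⟩
    show (if k + u.length < u.length then pu (k + u.length) else ρ' (k + u.length - u.length),
      ωAppend u τ (k + u.length),
      if k + u.length + 1 < u.length then pu (k + u.length + 1)
        else ρ' (k + u.length + 1 - u.length)) ∈ B.Acc
    rw [if_neg (by omega), if_neg (by omega), hωge (k + u.length) (by omega)]
    rw [show k + u.length + 1 - u.length = k + 1 by omega,
      show k + u.length - u.length = k by omega]
    exact hka


end Stmt3Aux

/-- `σ` is accepted by the transition-based NBA `B` iff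
`σ ∈ ⋃_{q₀ ∈ Q₀, q ∈ F̃} L_{q₀q,all} · ((L_{qq,rej})* · L_{qq,acc})^ω`. -/
theorem stmt3 {Q α : Type*} [Finite Q] (B : NBA Q α) (σ : ℕ → α) :
    B.Accepts σ ↔
      ∃ q0 ∈ B.Q0, ∃ q ∈ B.Ftil,
        σ ∈ catOmega (B.Lall q0 q) (omegaPow ((B.Lrej q q)∗ * B.Lacc q q)) := by
  constructor
  · rintro ⟨ρ, ⟨hρ0, hρΔ⟩, hρA⟩
    obtain ⟨q, hq⟩ := Stmt3Aux.pigeon ρ hρA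
    have hqF : q ∈ B.Ftil := by
      obtain ⟨k, _, hacc, hk⟩ := hq 0
      exact ⟨σ k, ρ (k + 1), by rw [← hk]; exact hacc⟩
    have hP0 : ∀ N, ∃ k ≥ N, (1 ≤ k ∧ ρ k = q) := by
      intro N
      obtain ⟨k, hk, _, h2⟩ := hq (max N 1)
      exact ⟨k, by omega, by omega, h2⟩
    obtain ⟨s, hs1, hsq, hspre⟩ :
        ∃ s, 1 ≤ s ∧ ρ s = q ∧ ∀ k, 1 ≤ k → k < s → ρ k ≠ q :=
      ⟨Stmt3Aux.enum hP0 0, (Stmt3Aux.enum_prop hP0 0).1, (Stmt3Aux.enum_prop hP0 0).2,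
        fun k h1 h2 hk => Stmt3Aux.enum_pre hP0 k h2 ⟨h1, hk⟩⟩
    refine ⟨ρ 0, hρ0, q, hqF, Stmt3Aux.seg σ 0 s, ?_, fun n => σ (n + s), ?_, ?_⟩
    · refine ⟨Stmt3Aux.seg_ne_nil σ (by omega), ρ, rfl, ?_, ?_, ?_⟩
      · show ρ (Stmt3Aux.seg σ 0 s).length = q
        rw [Stmt3Aux.seg_length, Nat.sub_zero]
        exact hsq
      · intro k hk
        rw [List.get_eq_getElem, Stmt3Aux.seg_getElem, Nat.zero_add]
        exact hρΔ k
      · intro k hk0 hklen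
        rw [Stmt3Aux.seg_length, Nat.sub_zero] at hklen
        exact hspre k (by omega) hklen
    · apply Stmt3Aux.omegaPow_of_run (fun n => ρ (n + s))
      · show ρ (0 + s) = q
        rw [Nat.zero_add]; exact hsq
      · intro k
        show (ρ (k + s), σ (k + s), ρ (k + 1 + s)) ∈ B.Δ
        rw [show k + 1 + s = k + s + 1 by omega]
        exact hρΔ (k + s)
      · intro N
        obtain ⟨k, hk, hacc, hkq⟩ := hq (N + s)
        refine ⟨k - s, by omega, ?_, ?_⟩
        · show ρ (k - s + s) = q
          rw [show k - s + s = k by omega]; exact hkq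
        · show (ρ (k - s + s), σ (k - s + s), ρ (k - s + 1 + s)) ∈ B.Acc
          rw [show k - s + s = k by omega, show k - s + 1 + s = k + 1 by omega]
          exact hacc
    · exact (Stmt3Aux.ωAppend_seg_shift σ s).symm
  · rintro ⟨q0, hq0, q, hqF, u, hu, τ, hτ, rfl⟩
    obtain ⟨f, hfS, hcσ⟩ := hτ
    obtain ⟨ρ', h0', hΔ', hA'⟩ := Stmt3Aux.run_of_blocks
      (fun n => Stmt3Aux.goodRun_of_block (hfS n)) hcσ
    exact Stmt3Aux.accepts_of_parts hq0 hu ρ' h0' hΔ' hA'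
end

section
/- (Soundness direction) If an ω-word σ is accepted by the transition-based NBA B via a run starting at q₀ ∈ Q₀ that traverses accepting transitions out of some state q ∈ F̃ infinitely often, then σ ∈ L_{q₀q,all} · ((L_{qq,rej})* · L_{qq,acc})^ω, with the convention that the prefix may be empty. -/
open Computability

open Classical in
noncomputable def enumP (P : ℕ → Prop) (hP : ∀ N, ∃ k, N ≤ k ∧ P k) : ℕ → ℕ
  | 0 => Nat.find ((hP 0).imp fun _ h => h.2)
  | n+1 => Nat.find (p := fun k => enumP P hP n < k ∧ P k)
      ((hP (enumP P hP n + 1)).imp fun _ h => ⟨h.1, h.2⟩)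

open Classical in
lemma enumP_spec (P : ℕ → Prop) (hP : ∀ N, ∃ k, N ≤ k ∧ P k) (n : ℕ) :
    P (enumP P hP n) := by
  cases n with
  | zero => exact Nat.find_spec ((hP 0).imp fun _ h => h.2)
  | succ n => exact (Nat.find_spec ((hP (enumP P hP n + 1)).imp fun _ h => (⟨h.1, h.2⟩ : _ ∧ _))).2

open Classical in
lemma enumP_lt (P : ℕ → Prop) (hP : ∀ N, ∃ k, N ≤ k ∧ P k) (n : ℕ) :
    enumP P hP n < enumP P hP (n+1) :=
  (Nat.find_spec ((hP (enumP P hP n + 1)).imp fun _ h => (⟨h.1, h.2⟩ : _ ∧ _))).1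

lemma enumP_mono (P : ℕ → Prop) (hP : ∀ N, ∃ k, N ≤ k ∧ P k) :
    StrictMono (enumP P hP) :=
  strictMono_nat_of_lt_succ (enumP_lt P hP)

open Classical in
lemma enumP_min0 (P : ℕ → Prop) (hP : ∀ N, ∃ k, N ≤ k ∧ P k) {k : ℕ}
    (h : k < enumP P hP 0) : ¬ P k :=
  Nat.find_min ((hP 0).imp fun _ h => h.2) h

open Classical in
lemma enumP_between (P : ℕ → Prop) (hP : ∀ N, ∃ k, N ≤ k ∧ P k) {n k : ℕ}
    (h1 : enumP P hP n < k) (h2 : k < enumP P hP (n+1)) : ¬ P k := fun hp =>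
  Nat.find_min ((hP (enumP P hP n + 1)).imp fun _ h => (⟨h.1, h.2⟩ : _ ∧ _)) h2 ⟨h1, hp⟩

open Classical in
lemma enumP_surj (P : ℕ → Prop) (hP : ∀ N, ∃ k, N ≤ k ∧ P k) {k : ℕ} (hk : P k) :
    ∃ n, enumP P hP n = k := by
  induction k using Nat.strong_induction_on with
  | _ k IH =>
    by_cases hprev : ∃ j, j < k ∧ P j
    · obtain ⟨j0, hj0k, hj0⟩ := hprev
      have hk0 : 0 < k := Nat.pos_of_ne_zero (by rintro rfl; omega)
      set j := Nat.findGreatest P (k-1) with hj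
      have hjP : P j := Nat.findGreatest_spec (m := j0) (by omega) hj0
      have hjk : j < k := by
        have := Nat.findGreatest_le (P := P) (k-1); omega
      obtain ⟨n, hn⟩ := IH j hjk hjP
      refine ⟨n+1, ?_⟩
      have hle : enumP P hP (n+1) ≤ k :=
        Nat.find_min' _ ⟨hn ▸ hjk, hk⟩
      have hgt : enumP P hP n < enumP P hP (n+1) := enumP_lt P hP n
      rcases lt_or_eq_of_le hle with hlt | heq
      · exact absurd (enumP_spec P hP (n+1))
          (Nat.findGreatest_is_greatest (n := k-1) (by omega) (by omega))
      · exact heq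
    · push_neg at hprev
      have hle : enumP P hP 0 ≤ k := Nat.find_min' _ hk
      rcases lt_or_eq_of_le hle with hlt | heq
      · exact absurd (enumP_spec P hP 0) (hprev _ hlt)
      · exact ⟨0, heq⟩

def seg {α : Type*} (σ : ℕ → α) (a b : ℕ) : List α :=
  List.ofFn (fun i : Fin (b - a) => σ (a + i))

@[simp] lemma seg_length {α : Type*} (σ : ℕ → α) (a b : ℕ) :
    (seg σ a b).length = b - a := by simp [seg]

lemma seg_get {α : Type*} (σ : ℕ → α) (a b : ℕ) (k : ℕ) (h : k < (seg σ a b).length) :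
    (seg σ a b).get ⟨k, h⟩ = σ (a + k) := by
  simp [seg, List.get_ofFn]

lemma seg_getElem {α : Type*} (σ : ℕ → α) (a b : ℕ) (k : ℕ) (h : k < (seg σ a b).length) :
    (seg σ a b)[k] = σ (a + k) := by
  simp [seg]

lemma seg_append {α : Type*} (σ : ℕ → α) {a b c : ℕ} (hab : a ≤ b) (hbc : b ≤ c) :
    seg σ a b ++ seg σ b c = seg σ a c := by
  apply List.ext_getElem
  · simp; omega
  · intro k h1 h2
    rcases lt_or_ge k (b - a) with hk | hk
    · rw [List.getElem_append_left (by simpa using hk)]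
      rw [seg_getElem, seg_getElem]
    · rw [List.getElem_append_right (by simpa using hk)]
      rw [seg_getElem, seg_getElem]
      simp only [seg_length]
      congr 1
      omega

lemma flatten_seg {α : Type*} (σ : ℕ → α) (t : ℕ → ℕ) (ht : ∀ i, t i ≤ t (i+1))
    (b n : ℕ) :
    (List.ofFn (fun i : Fin n => seg σ (t (b+i)) (t (b+i+1)))).flatten
      = seg σ (t b) (t (b+n)) := by
  have hmono : Monotone t := monotone_nat_of_le_succ ht
  induction n with
  | zero => simp [seg]
  | succ n IH =>
    rw [List.ofFn_succ']
    simp only [List.concat_eq_append, List.flatten_append, Fin.coe_castSucc, Fin.val_last,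
      List.flatten_cons, List.flatten_nil, List.append_nil]
    rw [IH]
    rw [seg_append σ (hmono (Nat.le_add_right b n)) (ht (b+n)), Nat.add_assoc]


/-- soundness direction: if `σ` is accepted by `B` via a run starting
at `q₀ ∈ Q₀` that traverses accepting transitions out of the state `q` infinitely
often, then `σ ∈ L_{q₀q,all} · ((L_{qq,rej})* · L_{qq,acc})^ω`, with the convention
that the prefix may be empty. -/
theorem stmt4 {Q α : Type*} (B : NBA Q α) (σ : ℕ → α) (q0 q : Q) (ρ : ℕ → Q)
    (h0 : ρ 0 = q0) (hq0 : q0 ∈ B.Q0)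
    (hrun : ∀ k, (ρ k, σ k, ρ (k + 1)) ∈ B.Δ)
    (hacc : ∀ N, ∃ k ≥ N, ρ k = q ∧ (ρ k, σ k, ρ (k + 1)) ∈ B.Acc) :
    σ ∈ catOmega (insert [] (B.Lall q0 q))
        (omegaPow ((B.Lrej q q)∗ * B.Lacc q q)) := by
  classical
  have hvis : ∀ N, ∃ k, N ≤ k ∧ ρ k = q := by
    intro N; obtain ⟨k, hk, h1, _⟩ := hacc N; exact ⟨k, hk, h1⟩
  obtain ⟨v, hvq, hvlt, hv0min, hvbet, hvsurj⟩ :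
      ∃ v : ℕ → ℕ, (∀ n, ρ (v n) = q) ∧ (∀ n, v n < v (n+1)) ∧
        (∀ k, k < v 0 → ¬ ρ k = q) ∧ (∀ n k, v n < k → k < v (n+1) → ¬ ρ k = q) ∧
        (∀ k, ρ k = q → ∃ n, v n = k) :=
    ⟨enumP _ hvis, enumP_spec _ hvis, enumP_lt _ hvis,
     fun k h => enumP_min0 _ hvis h, fun n k h1 h2 => enumP_between _ hvis h1 h2,
     fun k h => enumP_surj _ hvis h⟩
  have hvmono : StrictMono v := strictMono_nat_of_lt_succ hvlt
  -- each inter-visit segment has a FinRun from q to q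
  have hfinrun : ∀ n, B.FinRun q q (seg σ (v n) (v (n+1))) (fun k => ρ (v n + k)) := by
    intro n
    refine ⟨by simpa using hvq n, ?_, ?_, ?_⟩
    · show ρ (v n + (seg σ (v n) (v (n+1))).length) = q
      rw [seg_length, Nat.add_sub_cancel' (le_of_lt (hvlt n))]
      exact hvq (n+1)
    · intro k h
      rw [seg_get]
      exact hrun (v n + k)
    · intro k hk hklen
      simp only [seg_length] at hklen
      exact fun hcon => hvbet n (v n + k) (by omega) (by omega) (by simpa using hcon)
  have hsegne : ∀ n, seg σ (v n) (v (n+1)) ≠ [] := by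
    intro n
    apply List.ne_nil_of_length_pos
    rw [seg_length]
    have := hvlt n; omega
  -- accepting segment indices
  have haccinf : ∀ N, ∃ n, N ≤ n ∧ (ρ (v n), σ (v n), ρ (v n + 1)) ∈ B.Acc := by
    intro N
    obtain ⟨k, hk, hkq, hkacc⟩ := hacc (v N)
    obtain ⟨n, rfl⟩ := hvsurj k hkq
    exact ⟨n, hvmono.le_iff_le.mp hk, hkacc⟩
  obtain ⟨a, haA, halt, ha0, habet, -⟩ :
      ∃ a : ℕ → ℕ, (∀ m, (ρ (v (a m)), σ (v (a m)), ρ (v (a m) + 1)) ∈ B.Acc) ∧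
        (∀ m, a m < a (m+1)) ∧
        (∀ i, i < a 0 → ¬ (ρ (v i), σ (v i), ρ (v i + 1)) ∈ B.Acc) ∧
        (∀ m i, a m < i → i < a (m+1) → ¬ (ρ (v i), σ (v i), ρ (v i + 1)) ∈ B.Acc) ∧
        True :=
    ⟨enumP _ haccinf, enumP_spec _ haccinf, enumP_lt _ haccinf,
     fun i h => enumP_min0 _ haccinf h, fun m i h1 h2 => enumP_between _ haccinf h1 h2,
     trivial⟩
  -- block boundaries
  set s : ℕ → ℕ := fun m => match m with | 0 => 0 | m+1 => a m + 1 with hs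
  have hs0 : s 0 = 0 := rfl
  have hssucc : ∀ m, s (m+1) = a m + 1 := fun m => rfl
  have hsa : ∀ m, s m ≤ a m := by
    intro m
    cases m with
    | zero => exact Nat.zero_le _
    | succ m => rw [hssucc]; exact halt m
  have hnracc : ∀ m i, s m ≤ i → i < a m →
      ¬ (ρ (v i), σ (v i), ρ (v i + 1)) ∈ B.Acc := by
    intro m i h1 h2
    cases m with
    | zero => exact ha0 i h2
    | succ m => exact habet m i (by rw [hssucc] at h1; omega) h2
  have hss : ∀ m, s m ≤ s (m+1) := by
    intro m; have := hsa m; rw [hssucc]; omega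
  -- segment membership in Lrej / Lacc
  have hwrej : ∀ m i, s m ≤ i → i < a m → seg σ (v i) (v (i+1)) ∈ B.Lrej q q := by
    intro m i h1 h2
    refine ⟨hsegne i, _, hfinrun i, ?_⟩
    intro h
    rw [seg_get]
    simpa using hnracc m i h1 h2
  have hwacc : ∀ m, seg σ (v (a m)) (v (a m + 1)) ∈ B.Lacc q q := by
    intro m
    refine ⟨hsegne (a m), _, hfinrun (a m), ?_⟩
    intro h
    rw [seg_get]
    simpa using haA m
  -- blocks
  have hblock : ∀ m, seg σ (v (s m)) (v (s (m+1))) ∈ (B.Lrej q q)∗ * B.Lacc q q := by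
    intro m
    rw [Language.mem_mul]
    refine ⟨seg σ (v (s m)) (v (a m)), ?_, seg σ (v (a m)) (v (a m + 1)), hwacc m, ?_⟩
    · rw [Language.mem_kstar]
      refine ⟨List.ofFn (fun i : Fin (a m - s m) =>
        seg σ (v (s m + i)) (v (s m + i + 1))), ?_, ?_⟩
      · rw [flatten_seg σ v (fun i => le_of_lt (hvlt i)) (s m) (a m - s m),
          Nat.add_sub_cancel' (hsa m)]
      · intro y hy
        rw [List.mem_ofFn] at hy
        obtain ⟨i, rfl⟩ := hy
        exact hwrej m (s m + i) (Nat.le_add_right _ _) (by have := i.isLt; omega)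
    · rw [seg_append σ (hvmono.monotone (hsa m)) (le_of_lt (hvlt (a m))), hssucc]
  -- assemble
  refine ⟨seg σ 0 (v 0), ?_, fun k => σ (v 0 + k), ?_, ?_⟩
  · rcases Nat.eq_zero_or_pos (v 0) with h | h
    · left
      simp [seg, h]
    · right
      refine ⟨?_, ρ, h0, ?_, ?_, ?_⟩
      · apply List.ne_nil_of_length_pos; rw [seg_length]; omega
      · show ρ (seg σ 0 (v 0)).length = q
        rw [seg_length, Nat.sub_zero]
        exact hvq 0
      · intro k hk
        rw [seg_get, Nat.zero_add]
        exact hrun k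
      · intro k hk hklen
        rw [seg_length, Nat.sub_zero] at hklen
        exact hv0min k hklen
  · refine ⟨fun m => seg σ (v (s m)) (v (s (m+1))), fun m => hblock m, ?_, ?_⟩
    · intro m
      apply List.ne_nil_of_length_pos
      rw [seg_length]
      have h1 : v (s m) ≤ v (a m) := hvmono.monotone (hsa m)
      have h2 : v (a m) < v (a m + 1) := hvlt (a m)
      rw [hssucc]
      omega
    · intro n
      have hfl := flatten_seg σ (fun m => v (s m)) (fun i => hvmono.monotone (hss i)) 0 n
      simp only [Nat.zero_add] at hfl
      have heq : (List.ofFn fun i : Fin n =>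
          (fun m => seg σ (v (s m)) (v (s (m+1)))) (i : ℕ)).flatten
          = seg σ (v (s 0)) (v (s n)) := hfl
      rw [heq]
      intro k hk
      rw [seg_get]
  · funext n
    unfold ωAppend
    split
    · next h =>
      rw [seg_get, Nat.zero_add]
    · next h =>
      rw [seg_length] at *
      congr 1
      omega
end

section
/- (Completeness direction) Every ω-word in L_{q₀q,all} · ((L_{qq,rej})* · L_{qq,acc})^ω, for q₀ ∈ Q₀ and q ∈ F̃, has a run in B that starts at q₀ and traverses an accepting transition out of q infinitely many times, hence is accepted by B. -/
open Computability

/-!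
Every block of `((L_{qq,rej})* · L_{qq,acc})` is read along a path from `q` back to `q` whose
last factor starts with an accepting transition out of `q`. The paths along the first `n`
blocks extend one another, so they have a limit, an infinite run from `q` that takes such a
transition in every block; prefixing it with a run on the word of `L_{q₀q,all}` gives the run
from `q₀`.
-/

namespace NBA

variable {Q α : Type*} {B : NBA Q α}

def IsPath (B : NBA Q α) (i j : Q) (w : List α) (p : ℕ → Q) : Prop :=
  p 0 = i ∧ p w.length = j ∧ ∀ k (hk : k < w.length), (p k, w[k], p (k + 1)) ∈ B.Δ

def IsAccLoop (B : NBA Q α) (q : Q) (w : List α) (p : ℕ → Q) : Prop :=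
  B.IsPath q q w p ∧ ∃ k, ∃ hk : k < w.length, p k = q ∧ (p k, w[k], p (k + 1)) ∈ B.Acc

def IsRecurrentRun (B : NBA Q α) (i q : Q) (σ : ℕ → α) (ρ : ℕ → Q) : Prop :=
  ρ 0 = i ∧ (∀ k, (ρ k, σ k, ρ (k + 1)) ∈ B.Δ) ∧
    ∀ N, ∃ k ≥ N, ρ k = q ∧ (ρ k, σ k, ρ (k + 1)) ∈ B.Acc

theorem FinRun.isPath {i j : Q} {w : List α} {p : ℕ → Q} (h : B.FinRun i j w p) :
    B.IsPath i j w p :=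
  ⟨h.1, h.2.1, fun k hk => by simpa using h.2.2.1 k hk⟩

theorem isPath_nil (i : Q) : B.IsPath i i [] fun _ => i :=
  ⟨rfl, rfl, fun _ hk => absurd hk (Nat.not_lt_zero _)⟩

theorem IsRecurrentRun.accepts {i q : Q} {σ : ℕ → α} {ρ : ℕ → Q}
    (h : B.IsRecurrentRun i q σ ρ) (hi : i ∈ B.Q0) : B.Accepts σ :=
  ⟨ρ, ⟨h.1 ▸ hi, h.2.1⟩, fun N => (h.2.2 N).imp fun _ ⟨hk, _, hacc⟩ => ⟨hk, hacc⟩⟩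

end NBA

def pathAppend {Q : Type*} (p : ℕ → Q) (n : ℕ) (ρ : ℕ → Q) : ℕ → Q :=
  fun k => if k < n then p k else ρ (k - n)

section pathAppend

variable {Q : Type*} {p ρ : ℕ → Q} {n k : ℕ}

theorem pathAppend_eq_left (h : p n = ρ 0) (hk : k ≤ n) : pathAppend p n ρ k = p k := by
  rcases hk.lt_or_eq with hk | rfl
  · exact if_pos hk
  · simp [pathAppend, h]

theorem pathAppend_add (k : ℕ) : pathAppend p n ρ (n + k) = ρ k := by
  simp [pathAppend]

end pathAppend

theorem ωAppend_of_lt {α : Type*} {u : List α} {τ : ℕ → α} {k : ℕ} (hk : k < u.length) :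
    ωAppend u τ k = u[k] := by
  simp [ωAppend, hk]

theorem ωAppend_add {α : Type*} (u : List α) (τ : ℕ → α) (k : ℕ) :
    ωAppend u τ (u.length + k) = τ k := by
  simp [ωAppend]

section flatten

variable {α : Type*}

theorem flatten_ofFn_succ (g : ℕ → List α) (n : ℕ) :
    (List.ofFn fun i : Fin (n + 1) => g i).flatten =
      (List.ofFn fun i : Fin n => g i).flatten ++ g n := by
  rw [List.ofFn_succ', List.concat_eq_append, List.flatten_append]
  simp

theorem le_length_flatten_ofFn {g : ℕ → List α} (hg : ∀ n, g n ≠ []) (n : ℕ) :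
    n ≤ (List.ofFn fun i : Fin n => g i).flatten.length := by
  induction n with
  | zero => exact Nat.zero_le _
  | succ n ih =>
    have := List.length_pos_iff.mpr (hg n)
    rw [flatten_ofFn_succ, List.length_append]
    omega

end flatten

theorem exists_eq_of_coherent_prefixes {Q : Type*} {P : ℕ → ℕ → Q} {len : ℕ → ℕ}
    (hmono : Monotone len) (hlen : ∀ n, n ≤ len n)
    (hP : ∀ n k, k ≤ len n → P (n + 1) k = P n k) :
    ∃ ρ : ℕ → Q, ∀ n k, k ≤ len n → ρ k = P n k := by
  have hcoh : ∀ n m k, n ≤ m → k ≤ len n → P m k = P n k := by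
    intro n m k hnm hk
    induction m, hnm using Nat.le_induction with
    | base => rfl
    | succ m hnm ih => rw [hP m k (hk.trans (hmono hnm)), ih]
  refine ⟨fun k => P k k, fun n k hk => ?_⟩
  rcases le_total n k with h | h
  · exact hcoh n k k h hk
  · exact (hcoh k n k h (hlen k)).symm

namespace NBA

variable {Q α : Type*} {B : NBA Q α}

theorem IsPath.append {i j l : Q} {w₁ w₂ : List α} {p₁ p₂ : ℕ → Q}
    (h₁ : B.IsPath i j w₁ p₁) (h₂ : B.IsPath j l w₂ p₂) :
    B.IsPath i l (w₁ ++ w₂) (pathAppend p₁ w₁.length p₂) := by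
  have hjoin : p₁ w₁.length = p₂ 0 := h₁.2.1.trans h₂.1.symm
  refine ⟨?_, ?_, fun k hk => ?_⟩
  · rw [pathAppend_eq_left hjoin (Nat.zero_le _), h₁.1]
  · rw [List.length_append, pathAppend_add, h₂.2.1]
  · rcases lt_or_ge k w₁.length with hk₁ | hk₁
    · rw [pathAppend_eq_left hjoin hk₁.le, pathAppend_eq_left hjoin hk₁,
        List.getElem_append_left hk₁]
      exact h₁.2.2 k hk₁
    · obtain ⟨k, rfl⟩ := Nat.exists_eq_add_of_le hk₁
      rw [List.length_append] at hk
      rw [add_assoc, pathAppend_add, pathAppend_add, List.getElem_append_right hk₁]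
      simpa using h₂.2.2 k (by omega)

theorem IsPath.append_isAccLoop {q : Q} {w₁ w₂ : List α} {p₁ p₂ : ℕ → Q}
    (h₁ : B.IsPath q q w₁ p₁) (h₂ : B.IsAccLoop q w₂ p₂) :
    B.IsAccLoop q (w₁ ++ w₂) (pathAppend p₁ w₁.length p₂) := by
  obtain ⟨hpath, k, hk, hq, hacc⟩ := h₂
  refine ⟨h₁.append hpath, w₁.length + k, by simpa using hk, ?_⟩
  rw [add_assoc, pathAppend_add, pathAppend_add,
    List.getElem_append_right (Nat.le_add_right _ _)]
  simpa using ⟨hq, hacc⟩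

theorem IsPath.isRecurrentRun_ωAppend {i j q : Q} {u : List α} {p ρ : ℕ → Q} {τ : ℕ → α}
    (hp : B.IsPath i j u p) (hρ : B.IsRecurrentRun j q τ ρ) :
    B.IsRecurrentRun i q (ωAppend u τ) (pathAppend p u.length ρ) := by
  obtain ⟨hρ0, hΔ, hacc⟩ := hρ
  have hjoin : p u.length = ρ 0 := hp.2.1.trans hρ0.symm
  have hshift : ∀ k, (pathAppend p u.length ρ (u.length + k), ωAppend u τ (u.length + k),
      pathAppend p u.length ρ (u.length + k + 1)) = (ρ k, τ k, ρ (k + 1)) := fun k => by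
    rw [add_assoc, pathAppend_add, pathAppend_add, ωAppend_add]
  refine ⟨(pathAppend_eq_left hjoin (Nat.zero_le _)).trans hp.1, fun k => ?_, fun N => ?_⟩
  · rcases lt_or_ge k u.length with hk | hk
    · rw [pathAppend_eq_left hjoin hk.le, pathAppend_eq_left hjoin hk, ωAppend_of_lt hk]
      exact hp.2.2 k hk
    · obtain ⟨k, rfl⟩ := Nat.exists_eq_add_of_le hk
      rw [hshift]
      exact hΔ k
  · obtain ⟨k, hkN, hq, hk⟩ := hacc N
    refine ⟨u.length + k, le_add_left hkN, ?_⟩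
    rw [hshift, pathAppend_add]
    exact ⟨hq, hk⟩

theorem exists_isPath_of_mem_kstar {q : Q} {L : Language α}
    (hL : ∀ w ∈ L, ∃ p, B.IsPath q q w p) {w : List α} (hw : w ∈ L∗) :
    ∃ p, B.IsPath q q w p := by
  obtain ⟨ws, rfl, hws⟩ := Language.mem_kstar.mp hw
  clear hw
  induction ws with
  | nil => exact ⟨_, isPath_nil q⟩
  | cons x ws ih =>
    obtain ⟨p, hp⟩ := hL x (hws x List.mem_cons_self)
    obtain ⟨p', hp'⟩ := ih fun y hy => hws y (List.mem_cons_of_mem x hy)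
    exact ⟨_, hp.append hp'⟩

theorem exists_isAccLoop_of_mem {q : Q} {w : List α} (hw : w ∈ (B.Lrej q q)∗ * B.Lacc q q) :
    ∃ p, B.IsAccLoop q w p := by
  obtain ⟨a, ha, b, ⟨hb, pb, hpb, hacc⟩, rfl⟩ := Language.mem_mul.mp hw
  have hrej : ∀ w ∈ B.Lrej q q, ∃ p, B.IsPath q q w p := fun _ ⟨_, p, hp, _⟩ => ⟨p, hp.isPath⟩
  obtain ⟨pa, hpa⟩ := exists_isPath_of_mem_kstar hrej ha
  have hb0 : 0 < b.length := List.length_pos_iff.mpr hb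
  exact ⟨_, hpa.append_isAccLoop ⟨hpb.isPath, 0, hb0, hpb.1, by simpa using hacc hb0⟩⟩

theorem exists_isRecurrentRun_of_infConcat {q : Q} {g : ℕ → List α} {τ : ℕ → α}
    (hτ : InfConcat g τ) (hg : ∀ n, ∃ p, B.IsAccLoop q (g n) p) :
    ∃ ρ, B.IsRecurrentRun q q τ ρ := by
  choose p hp using hg
  set F : ℕ → List α := fun n => (List.ofFn fun i : Fin n => g i).flatten
  have hF : ∀ n, F (n + 1) = F n ++ g n := flatten_ofFn_succ g
  have hτF : ∀ n k (hk : k < (F n).length), τ k = (F n)[k] := fun n k hk =>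
    (hτ.2 n k hk).symm
  have hmono : Monotone fun n => (F n).length :=
    monotone_nat_of_le_succ fun n => by simp [hF]
  have hlen : ∀ n, n ≤ (F n).length := le_length_flatten_ofFn hτ.1
  -- `P n` is the path along the first `n` blocks, built by appending their loops one by one.
  let P : ℕ → ℕ → Q := fun n =>
    Nat.rec (fun _ => q) (fun n Pn => pathAppend Pn (F n).length (p n)) n
  have hP : ∀ n, B.IsPath q q (F n) (P n) := by
    intro n
    induction n with
    | zero => exact isPath_nil q
    | succ n ih => rw [hF]; exact ih.append (hp n).1
  obtain ⟨ρ, hρ⟩ := exists_eq_of_coherent_prefixes (P := P) hmono hlen fun n k hk =>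
    pathAppend_eq_left ((hP n).2.1.trans (hp n).1.1.symm) hk
  have htrans : ∀ n k (hk : k < (F n).length),
      (ρ k, τ k, ρ (k + 1)) = (P n k, (F n)[k], P n (k + 1)) := fun n k hk => by
    rw [hρ n k hk.le, hρ n (k + 1) hk, hτF n k hk]
  refine ⟨ρ, (hρ 0 0 le_rfl).trans (hP 0).1, fun k => ?_, fun N => ?_⟩
  · have hk : k < (F (k + 1)).length := hlen (k + 1)
    rw [htrans (k + 1) k hk]
    exact (hP (k + 1)).2.2 k hk
  · obtain ⟨j, hj, hq, hacc⟩ := (hp N).2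
    have hk : (F N).length + j < (F (N + 1)).length := by simp [hF, hj]
    refine ⟨(F N).length + j, (hlen N).trans (Nat.le_add_right _ _), ?_⟩
    have hPN : P (N + 1) = pathAppend (P N) (F N).length (p N) := rfl
    have hρk : ρ ((F N).length + j) = p N j := by rw [hρ (N + 1) _ hk.le, hPN, pathAppend_add]
    rw [htrans (N + 1) _ hk, hPN, add_assoc, pathAppend_add, pathAppend_add]
    exact ⟨hρk.trans hq, by simpa [hF] using hacc⟩

end NBA

theorem stmt5_general {Q α : Type*} (B : NBA Q α) (q0 q : Q)
    (hq0 : q0 ∈ B.Q0) (σ : ℕ → α)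
    (h : σ ∈ catOmega (B.Lall q0 q) (omegaPow ((B.Lrej q q)∗ * B.Lacc q q))) :
    (∃ ρ : ℕ → Q, ρ 0 = q0 ∧ (∀ k, (ρ k, σ k, ρ (k + 1)) ∈ B.Δ) ∧
      ∀ N, ∃ k ≥ N, ρ k = q ∧ (ρ k, σ k, ρ (k + 1)) ∈ B.Acc) ∧
    B.Accepts σ := by
  obtain ⟨u, ⟨-, pu, hpu⟩, τ, ⟨g, hg, hτ⟩, rfl⟩ := h
  obtain ⟨ρ, hρ⟩ :=
    NBA.exists_isRecurrentRun_of_infConcat hτ fun n => NBA.exists_isAccLoop_of_mem (hg n)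
  have hrun := hpu.isPath.isRecurrentRun_ωAppend hρ
  exact ⟨⟨_, hrun⟩, hrun.accepts hq0⟩

/-- completeness direction: every ω-word in
`L_{q₀q,all} · ((L_{qq,rej})* · L_{qq,acc})^ω`, for `q₀ ∈ Q₀` and `q ∈ F̃`, has a run
in `B` starting at `q₀` that traverses an accepting transition out of `q` infinitely
many times; hence it is accepted by `B`. -/
theorem stmt5 {Q α : Type*} (B : NBA Q α) (q0 q : Q)
    (hq0 : q0 ∈ B.Q0) (hq : q ∈ B.Ftil) (σ : ℕ → α)
    (h : σ ∈ catOmega (B.Lall q0 q) (omegaPow ((B.Lrej q q)∗ * B.Lacc q q))) :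
    (∃ ρ : ℕ → Q, ρ 0 = q0 ∧ (∀ k, (ρ k, σ k, ρ (k + 1)) ∈ B.Δ) ∧
      ∀ N, ∃ k ≥ N, ρ k = q ∧ (ρ k, σ k, ρ (k + 1)) ∈ B.Acc) ∧
    B.Accepts σ :=
  stmt5_general B q0 q hq0 σ h
end
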